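/- arXiv:2212.02111 — 5 statements merged into one kernel-verified Lean document; each statement's English description precedes it below -/
import Mathlib

section
/- Proposition 1(a) (system level parameterisation, direct part): Let A ∈ ℝ^{n×n}, B ∈ ℝ^{n×m}, B_w ∈ ℝ^{n×n}, and let 𝒜 = diag(A,…,A,0_{n,n}), ℬ = diag(B,…,B,0_{n,m}), ℰ = diag(I_n, B_w,…,B_w), and Z be the block downshift operator. For any block lower triangular K ∈ L^{N,m×n}, the matrix I − Z(𝒜 + ℬK) is invertible; define Φ_x := (I − Z(𝒜 + ℬK))⁻¹ℰ and Φ_u := K·Φ_x. Then Φ_x ∈ L^{N,n×n} and Φ_u ∈ L^{N,m×n} are block lower triangular, they satisfy the system level subspace equation (I − Z𝒜)Φ_x − ZℬΦ_u = ℰ, and for every δ ∈ ℝ^{(N+1)n}, the vectors Δx := Φ_x δ and Δu := Φ_u δ satisfy the error dynamics Δx = Z𝒜Δx + ZℬΔu + ℰδ and the feedback relation Δu = KΔx; moreover Δx is the unique solution of these error dynamics for the given δ and Δu = KΔx. -/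
open Matrix Finset Pointwise

noncomputable section

/-- The closed unit ball of the `∞`-norm: `{w : ‖w‖∞ ≤ 1}`. -/
def Binf (ι : Type*) : Set (ι → ℝ) := {w | ∀ i, |w i| ≤ 1}

/-- Block lower triangular: all `p × q` blocks strictly above the block diagonal vanish. -/
def BlockLT {N p q : ℕ} (M : Matrix (Fin (N+1) × Fin p) (Fin (N+1) × Fin q) ℝ) : Prop :=
  ∀ (i j : Fin (N+1)) (a : Fin p) (b : Fin q), i < j → M (i, a) (j, b) = 0

/-- Strictly block lower triangular: all blocks on or above the block diagonal vanish. -/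
def StrictBlockLT {N p q : ℕ} (M : Matrix (Fin (N+1) × Fin p) (Fin (N+1) × Fin q) ℝ) : Prop :=
  ∀ (i j : Fin (N+1)) (a : Fin p) (b : Fin q), i ≤ j → M (i, a) (j, b) = 0

/-- The block downshift operator `Z`: identity blocks on the first block subdiagonal. -/
def downshift (N n : ℕ) : Matrix (Fin (N+1) × Fin n) (Fin (N+1) × Fin n) ℝ :=
  fun p q => if ((p.1 : ℕ) = (q.1 : ℕ) + 1 ∧ p.2 = q.2) then 1 else 0

/-- `𝒜 = diag(A, …, A, 0)` with `N` copies of `A`. -/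
def blkDiagA {n : ℕ} (N : ℕ) (A : Matrix (Fin n) (Fin n) ℝ) :
    Matrix (Fin (N+1) × Fin n) (Fin (N+1) × Fin n) ℝ :=
  fun p q => if (p.1 = q.1 ∧ (p.1 : ℕ) < N) then A p.2 q.2 else 0

/-- `ℬ = diag(B, …, B, 0)` with `N` copies of `B`. -/
def blkDiagB {n m : ℕ} (N : ℕ) (B : Matrix (Fin n) (Fin m) ℝ) :
    Matrix (Fin (N+1) × Fin n) (Fin (N+1) × Fin m) ℝ :=
  fun p q => if (p.1 = q.1 ∧ (p.1 : ℕ) < N) then B p.2 q.2 else 0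

/-- `ℰ = diag(I, B_w, …, B_w)` with `N` copies of `B_w`. -/
def blkDiagE {n : ℕ} (N : ℕ) (Bw : Matrix (Fin n) (Fin n) ℝ) :
    Matrix (Fin (N+1) × Fin n) (Fin (N+1) × Fin n) ℝ :=
  fun p q => if p.1 = q.1 then
      (if (p.1 : ℕ) = 0 then (if p.2 = q.2 then (1 : ℝ) else 0) else Bw p.2 q.2) else 0

/-- The `(k, j)` block of a block matrix. -/
def blk {N p q : ℕ} (M : Matrix (Fin (N+1) × Fin p) (Fin (N+1) × Fin q) ℝ) (k j : Fin (N+1)) :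
    Matrix (Fin p) (Fin q) ℝ := fun a b => M (k, a) (j, b)

/-- The last `N·n` columns of the `k`-th block row of a block matrix (the "`w`" part). -/
def blkRowW {N p n : ℕ} (M : Matrix (Fin (N+1) × Fin p) (Fin (N+1) × Fin n) ℝ) (k : Fin (N+1)) :
    Matrix (Fin p) (Fin N × Fin n) ℝ := fun a q => M (k, a) (q.1.succ, q.2)

/-- The full `k`-th block row of a block matrix. -/
def blkRowFull {N p n : ℕ} (M : Matrix (Fin (N+1) × Fin p) (Fin (N+1) × Fin n) ℝ)
    (k : Fin (N+1)) : Matrix (Fin p) (Fin (N+1) × Fin n) ℝ := fun a q => M (k, a) q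

section auxLem
variable {N p q r : ℕ}

lemma blockLT_mul {M : Matrix (Fin (N+1) × Fin p) (Fin (N+1) × Fin q) ℝ}
    {P : Matrix (Fin (N+1) × Fin q) (Fin (N+1) × Fin r) ℝ}
    (hM : BlockLT M) (hP : BlockLT P) : BlockLT (M * P) := by
  intro i j a b hij
  rw [Matrix.mul_apply]
  apply Finset.sum_eq_zero
  rintro ⟨k, c⟩ -
  rcases lt_or_ge i k with h | h
  · rw [hM i k a c h, zero_mul]
  · rw [hP k j c b (lt_of_le_of_lt h hij), mul_zero]

lemma sblockLT_mul {M : Matrix (Fin (N+1) × Fin p) (Fin (N+1) × Fin q) ℝ}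
    {P : Matrix (Fin (N+1) × Fin q) (Fin (N+1) × Fin r) ℝ}
    (hM : StrictBlockLT M) (hP : BlockLT P) : StrictBlockLT (M * P) := by
  intro i j a b hij
  rw [Matrix.mul_apply]
  apply Finset.sum_eq_zero
  rintro ⟨k, c⟩ -
  rcases le_or_gt i k with h | h
  · rw [hM i k a c h, zero_mul]
  · rw [hP k j c b (lt_of_lt_of_le h hij), mul_zero]

lemma sblockLT_blockLT {M : Matrix (Fin (N+1) × Fin p) (Fin (N+1) × Fin q) ℝ}
    (hM : StrictBlockLT M) : BlockLT M :=
  fun i j a b hij => hM i j a b hij.le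

lemma blockLT_one : BlockLT (1 : Matrix (Fin (N+1) × Fin p) (Fin (N+1) × Fin p) ℝ) := by
  intro i j a b hij
  exact Matrix.one_apply_ne (by simp [Prod.ext_iff]; intro h; exact absurd h hij.ne)

lemma blockLT_add {M P : Matrix (Fin (N+1) × Fin p) (Fin (N+1) × Fin q) ℝ}
    (hM : BlockLT M) (hP : BlockLT P) : BlockLT (M + P) := by
  intro i j a b hij
  simp [Matrix.add_apply, hM i j a b hij, hP i j a b hij]

lemma blockLT_pow {M : Matrix (Fin (N+1) × Fin p) (Fin (N+1) × Fin p) ℝ}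
    (hM : BlockLT M) (k : ℕ) : BlockLT (M ^ k) := by
  induction k with
  | zero => simpa using blockLT_one
  | succ k ih => rw [pow_succ]; exact blockLT_mul ih hM

lemma sblockLT_pow_apply {M : Matrix (Fin (N+1) × Fin p) (Fin (N+1) × Fin p) ℝ}
    (hM : StrictBlockLT M) : ∀ (k : ℕ) (i j : Fin (N+1)) (a b : Fin p),
    (i : ℕ) < (j : ℕ) + k → (M ^ k) (i, a) (j, b) = 0 := by
  intro k
  induction k with
  | zero =>
    intro i j a b hij
    simp only [pow_zero]
    exact blockLT_one i j a b (by omega)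
  | succ k ih =>
    intro i j a b hij
    rw [pow_succ', Matrix.mul_apply]
    apply Finset.sum_eq_zero
    rintro ⟨l, c⟩ -
    rcases le_or_gt i l with h | h
    · rw [hM i l a c h, zero_mul]
    · rw [ih l j c b (by omega), mul_zero]

lemma sblockLT_pow_eq_zero {M : Matrix (Fin (N+1) × Fin p) (Fin (N+1) × Fin p) ℝ}
    (hM : StrictBlockLT M) : M ^ (N + 1) = 0 := by
  ext x y
  obtain ⟨i, a⟩ := x
  obtain ⟨j, b⟩ := y
  exact sblockLT_pow_apply hM (N+1) i j a b (by have := i.is_lt; omega)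

lemma sblockLT_downshift {N n : ℕ} : StrictBlockLT (downshift N n) := by
  intro i j a b hij
  rw [Fin.le_def] at hij
  simp only [downshift]
  rw [if_neg]
  rintro ⟨h, -⟩
  omega

lemma blockLT_blkDiagA {N n : ℕ} (A : Matrix (Fin n) (Fin n) ℝ) :
    BlockLT (blkDiagA N A) := by
  intro i j a b hij
  rw [blkDiagA, if_neg]
  rintro ⟨h, -⟩
  exact absurd h hij.ne

lemma blockLT_blkDiagB {N n m : ℕ} (B : Matrix (Fin n) (Fin m) ℝ) :
    BlockLT (blkDiagB N B) := by
  intro i j a b hij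
  rw [blkDiagB, if_neg]
  rintro ⟨h, -⟩
  exact absurd h hij.ne

lemma blockLT_blkDiagE {N n : ℕ} (Bw : Matrix (Fin n) (Fin n) ℝ) :
    BlockLT (blkDiagE N Bw) := by
  intro i j a b hij
  rw [blkDiagE, if_neg hij.ne]

end auxLem

/-- Proposition 1(a), direct part of the system level parameterisation. -/
theorem stmt1 (n m N : ℕ) (hN : 1 ≤ N)
    (A : Matrix (Fin n) (Fin n) ℝ) (B : Matrix (Fin n) (Fin m) ℝ)
    (Bw : Matrix (Fin n) (Fin n) ℝ)
    (K : Matrix (Fin (N+1) × Fin m) (Fin (N+1) × Fin n) ℝ) (hK : BlockLT K) :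
    IsUnit (1 - downshift N n * (blkDiagA N A + blkDiagB N B * K)) ∧
    ∀ (Φx : Matrix (Fin (N+1) × Fin n) (Fin (N+1) × Fin n) ℝ)
      (Φu : Matrix (Fin (N+1) × Fin m) (Fin (N+1) × Fin n) ℝ),
      Φx = (1 - downshift N n * (blkDiagA N A + blkDiagB N B * K))⁻¹ * blkDiagE N Bw →
      Φu = K * Φx →
      BlockLT Φx ∧ BlockLT Φu ∧
      (1 - downshift N n * blkDiagA N A) * Φx - downshift N n * blkDiagB N B * Φu
        = blkDiagE N Bw ∧
      ∀ δ : Fin (N+1) × Fin n → ℝ,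
        (Φx *ᵥ δ = (downshift N n * blkDiagA N A) *ᵥ (Φx *ᵥ δ)
            + (downshift N n * blkDiagB N B) *ᵥ (Φu *ᵥ δ) + blkDiagE N Bw *ᵥ δ) ∧
        Φu *ᵥ δ = K *ᵥ (Φx *ᵥ δ) ∧
        ∀ Δx' : Fin (N+1) × Fin n → ℝ,
          Δx' = (downshift N n * blkDiagA N A) *ᵥ Δx'
              + (downshift N n * blkDiagB N B) *ᵥ (K *ᵥ Δx') + blkDiagE N Bw *ᵥ δ →
          Δx' = Φx *ᵥ δ := by
  set M := downshift N n * (blkDiagA N A + blkDiagB N B * K) with hMdef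
  have hMs : StrictBlockLT M :=
    sblockLT_mul sblockLT_downshift
      (blockLT_add (blockLT_blkDiagA A) (blockLT_mul (blockLT_blkDiagB B) hK))
  have hMb : BlockLT M := sblockLT_blockLT hMs
  have hnil : M ^ (N + 1) = 0 := sblockLT_pow_eq_zero hMs
  set S := ∑ k ∈ Finset.range (N + 1), M ^ k with hSdef
  have hright : (1 - M) * S = 1 := by
    rw [hSdef, mul_neg_geom_sum, hnil, sub_zero]
  have hU : IsUnit (1 - M) := (Matrix.isUnit_iff_isUnit_det _).mpr (Matrix.isUnit_det_of_right_inverse hright)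
  have hdet : IsUnit (1 - M).det := (Matrix.isUnit_iff_isUnit_det _).mp hU
  have hinv : (1 - M)⁻¹ = S := Matrix.inv_eq_right_inv hright
  have hSb : BlockLT S := by
    intro i j a b hij
    rw [hSdef, Matrix.sum_apply]
    exact Finset.sum_eq_zero fun k _ => blockLT_pow hMb k i j a b hij
  refine ⟨hU, ?_⟩
  intro Φx Φu hΦx hΦu
  have hΦxb : BlockLT Φx := by
    rw [hΦx, hinv]; exact blockLT_mul hSb (blockLT_blkDiagE Bw)
  have hΦub : BlockLT Φu := by
    rw [hΦu]; exact blockLT_mul hK hΦxb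
  have key : (1 - M) * Φx = blkDiagE N Bw := by
    rw [hΦx, ← Matrix.mul_assoc, Matrix.mul_nonsing_inv _ hdet, Matrix.one_mul]
  have heq : (1 - downshift N n * blkDiagA N A) * Φx
      - downshift N n * blkDiagB N B * Φu = blkDiagE N Bw := by
    rw [hΦu, ← key, hMdef]
    noncomm_ring
    simp only [Matrix.mul_assoc]
  refine ⟨hΦxb, hΦub, heq, ?_⟩
  have hmat : Φx = (downshift N n * blkDiagA N A) * Φx
      + (downshift N n * blkDiagB N B) * Φu + blkDiagE N Bw := by
    rw [← heq]; noncomm_ring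
  intro δ
  have hgoal1 : Φx *ᵥ δ = (downshift N n * blkDiagA N A) *ᵥ (Φx *ᵥ δ)
      + (downshift N n * blkDiagB N B) *ᵥ (Φu *ᵥ δ) + blkDiagE N Bw *ᵥ δ := by
    rw [Matrix.mulVec_mulVec, Matrix.mulVec_mulVec, ← Matrix.add_mulVec,
      ← Matrix.add_mulVec, ← hmat]
  have hgoal2 : Φu *ᵥ δ = K *ᵥ (Φx *ᵥ δ) := by
    rw [hΦu, Matrix.mulVec_mulVec]
  refine ⟨hgoal1, hgoal2, ?_⟩
  intro Δx' h
  rw [Matrix.mulVec_mulVec (v := Δx')] at h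
  have hsplit : downshift N n * blkDiagA N A
      + downshift N n * blkDiagB N B * K = M := by
    rw [hMdef, Matrix.mul_add, ← Matrix.mul_assoc]
  rw [← Matrix.add_mulVec, hsplit] at h
  have h3 : (1 - M) *ᵥ Δx' = blkDiagE N Bw *ᵥ δ := by
    rw [Matrix.sub_mulVec, Matrix.one_mulVec]
    exact sub_eq_of_eq_add' h
  have h4 : (1 - M) *ᵥ (Φx *ᵥ δ) = blkDiagE N Bw *ᵥ δ := by
    rw [Matrix.mulVec_mulVec, key]
  calc Δx' = (1 - M)⁻¹ *ᵥ ((1 - M) *ᵥ Δx') := by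
        rw [Matrix.mulVec_mulVec, Matrix.nonsing_inv_mul _ hdet, Matrix.one_mulVec]
    _ = (1 - M)⁻¹ *ᵥ ((1 - M) *ᵥ (Φx *ᵥ δ)) := by rw [h3, h4]
    _ = Φx *ᵥ δ := by
        rw [Matrix.mulVec_mulVec, Matrix.nonsing_inv_mul _ hdet, Matrix.one_mulVec]
end
end

section
/- If Φ_x ∈ L^{N,n×n} and Φ_u ∈ L^{N,m×n} are block lower triangular matrices satisfying the system level subspace equation (I − Z𝒜)Φ_x − ZℬΦ_u = ℰ, and B_w ∈ ℝ^{n×n} is invertible, then every diagonal block of Φ_x coincides with the corresponding diagonal block of ℰ (namely I_n for the first block and B_w for the remaining N blocks); consequently Φ_x is invertible and its inverse Φ_x⁻¹ is also block lower triangular. -/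
open Matrix Finset Pointwise

noncomputable section

/-- diagonal blocks of `Φ_x` coincide with those of `ℰ`; hence `Φ_x` is
invertible and its inverse is block lower triangular. -/
theorem stmt2 (n m N : ℕ) (hN : 1 ≤ N)
    (A : Matrix (Fin n) (Fin n) ℝ) (B : Matrix (Fin n) (Fin m) ℝ)
    (Bw : Matrix (Fin n) (Fin n) ℝ) (hBw : IsUnit Bw)
    (Φx : Matrix (Fin (N+1) × Fin n) (Fin (N+1) × Fin n) ℝ)
    (Φu : Matrix (Fin (N+1) × Fin m) (Fin (N+1) × Fin n) ℝ)
    (hΦx : BlockLT Φx) (hΦu : BlockLT Φu)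
    (hSLP : (1 - downshift N n * blkDiagA N A) * Φx - downshift N n * blkDiagB N B * Φu
      = blkDiagE N Bw) :
    (∀ (k : Fin (N+1)) (a b : Fin n), Φx (k, a) (k, b) = blkDiagE N Bw (k, a) (k, b)) ∧
    IsUnit Φx ∧ BlockLT Φx⁻¹ := by
  -- diagonal blocks
  have hdiag : ∀ (k : Fin (N+1)) (a b : Fin n), Φx (k, a) (k, b) = blkDiagE N Bw (k, a) (k, b) := by
    intro k a b
    have h := congrFun (congrFun hSLP (k, a)) (k, b)
    have hZA : ∀ q, (downshift N n * blkDiagA N A) (k, a) q * Φx q (k, b) = 0 := by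
      intro q
      rcases q with ⟨j, c⟩
      by_cases hj : (k : ℕ) = (j : ℕ) + 1
      · have : j < k := by
          rw [Fin.lt_def]; omega
        rw [hΦx j k c b this, mul_zero]
      · have : (downshift N n * blkDiagA N A) (k, a) (j, c) = 0 := by
          simp only [Matrix.mul_apply, downshift]
          apply Finset.sum_eq_zero
          intro ⟨i, d⟩ _
          simp only [blkDiagA]
          by_cases h1 : (k : ℕ) = (i : ℕ) + 1 ∧ a = d
          · by_cases h2 : i = j ∧ (i : ℕ) < N
            · exact absurd (h2.1 ▸ h1.1) hj
            · simp [h2]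
          · simp [h1]
        rw [this, zero_mul]
    have hZB : ∀ q, (downshift N n * blkDiagB N B) (k, a) q * Φu q (k, b) = 0 := by
      intro q
      rcases q with ⟨j, c⟩
      by_cases hj : (k : ℕ) = (j : ℕ) + 1
      · have : j < k := by rw [Fin.lt_def]; omega
        rw [hΦu j k c b this, mul_zero]
      · have : (downshift N n * blkDiagB N B) (k, a) (j, c) = 0 := by
          simp only [Matrix.mul_apply, downshift]
          apply Finset.sum_eq_zero
          intro ⟨i, d⟩ _
          simp only [blkDiagB]
          by_cases h1 : (k : ℕ) = (i : ℕ) + 1 ∧ a = d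
          · by_cases h2 : i = j ∧ (i : ℕ) < N
            · exact absurd (h2.1 ▸ h1.1) hj
            · simp [h2]
          · simp [h1]
        rw [this, zero_mul]
    rw [Matrix.sub_apply, Matrix.sub_mul, Matrix.sub_apply, Matrix.one_mul,
      Matrix.mul_apply, Matrix.mul_apply] at h
    rw [Finset.sum_eq_zero (fun q _ => hZA q), Finset.sum_eq_zero (fun q _ => hZB q)] at h
    simpa using h
  refine ⟨hdiag, ?_⟩
  -- block triangularity w.r.t. order dual of first coordinate
  set b : Fin (N+1) × Fin n → (Fin (N+1))ᵒᵈ := fun p => OrderDual.toDual p.1 with hb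
  have hBT : Φx.BlockTriangular b := by
    intro p q hpq
    exact hΦx p.1 q.1 p.2 q.2 hpq
  -- determinant of each square block
  have hsq : ∀ k : (Fin (N+1))ᵒᵈ, IsUnit (Φx.toSquareBlock b k).det := by
    intro k
    set k' : Fin (N+1) := OrderDual.ofDual k with hk'
    let e : Fin n ≃ {p : Fin (N+1) × Fin n // b p = k} :=
      { toFun := fun a => ⟨(k', a), rfl⟩
        invFun := fun p => p.1.2
        left_inv := fun a => rfl
        right_inv := fun p => by
          rcases p with ⟨⟨i, a⟩, hp⟩
          have : i = k' := congrArg OrderDual.ofDual hp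
          subst this; rfl }
    have hdet : (Φx.toSquareBlock b k).det
        = ((Φx.toSquareBlock b k).submatrix e e).det := (Matrix.det_submatrix_equiv_self e _).symm
    rw [hdet]
    have hblk : (Φx.toSquareBlock b k).submatrix e e
        = (if (k' : ℕ) = 0 then (1 : Matrix (Fin n) (Fin n) ℝ) else Bw) := by
      ext a c
      simp only [Matrix.submatrix_apply, Matrix.toSquareBlock_def, Matrix.of_apply]
      rw [show ((e a : {p : Fin (N+1) × Fin n // b p = k}) : Fin (N+1) × Fin n) = (k', a) from rfl,
        show ((e c : {p : Fin (N+1) × Fin n // b p = k}) : Fin (N+1) × Fin n) = (k', c) from rfl,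
        hdiag k' a c]
      simp only [blkDiagE]
      by_cases h0 : (k' : ℕ) = 0
      · simp [h0, Matrix.one_apply]
      · simp [h0]
    rw [hblk]
    by_cases h0 : (k' : ℕ) = 0
    · simp [h0]
    · simp only [h0, if_false]
      exact (Matrix.isUnit_iff_isUnit_det Bw).1 hBw
  have hdetU : IsUnit Φx.det := by
    rw [hBT.det_fintype]
    exact Finset.prod_induction _ IsUnit (fun _ _ => IsUnit.mul) isUnit_one (fun k _ => hsq k)
  refine ⟨(Matrix.isUnit_iff_isUnit_det Φx).2 hdetU, ?_⟩
  haveI : Invertible Φx := Φx.invertibleOfIsUnitDet hdetU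
  have := Matrix.blockTriangular_inv_of_blockTriangular hBT
  intro i j a c hij
  exact this (show b (j,c) < b (i,a) from hij)
end
end

section
/- Proposition 1(b) (system level parameterisation, converse part): Let B_w ∈ ℝ^{n×n} be invertible, and let Φ_x ∈ L^{N,n×n} and Φ_u ∈ L^{N,m×n} be arbitrary block lower triangular matrices satisfying the system level subspace equation (I − Z𝒜)Φ_x − ZℬΦ_u = ℰ. Then Φ_x is invertible, the matrix K := Φ_u Φ_x⁻¹ belongs to L^{N,m×n}, and for every δ ∈ ℝ^{(N+1)n}, the vectors Δx := Φ_x δ and Δu := Φ_u δ satisfy the error dynamics Δx = Z𝒜Δx + ZℬΔu + ℰδ and the feedback relation Δu = KΔx. -/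
open Matrix Finset Pointwise

noncomputable section

section Stmt3Aux

variable {N n m : ℕ}

/-- A matrix assembled from diagonal blocks. -/
def dg {N n : ℕ} (C : Fin (N+1) → Matrix (Fin n) (Fin n) ℝ) :
    Matrix (Fin (N+1) × Fin n) (Fin (N+1) × Fin n) ℝ :=
  fun p q => if p.1 = q.1 then C p.1 p.2 q.2 else 0

lemma dg_mul (C D : Fin (N+1) → Matrix (Fin n) (Fin n) ℝ) :
    dg C * dg D = dg (fun k => C k * D k) := by
  ext ⟨i, a⟩ ⟨j, b⟩
  rw [Matrix.mul_apply, Fintype.sum_prod_type]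
  simp only [dg, Matrix.mul_apply, ite_mul, zero_mul, mul_ite, mul_zero]
  by_cases hij : i = j
  · subst hij; simp
  · simp [hij]

lemma dg_one : dg (fun _ : Fin (N+1) => (1 : Matrix (Fin n) (Fin n) ℝ)) = 1 := by
  ext ⟨i, a⟩ ⟨j, b⟩
  simp only [dg, Matrix.one_apply, Prod.mk.injEq]
  by_cases hij : i = j
  · subst hij; simp
  · simp [hij]

lemma E_eq_dg (Bw : Matrix (Fin n) (Fin n) ℝ) :
    blkDiagE N Bw = dg (fun k => if (k : ℕ) = 0 then 1 else Bw) := by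
  ext ⟨i, a⟩ ⟨j, b⟩
  simp only [blkDiagE, dg]
  by_cases hij : i = j
  · subst hij
    by_cases h0 : (i : ℕ) = 0 <;> simp [h0, Matrix.one_apply]
  · simp [hij]

lemma strict_add {S T : Matrix (Fin (N+1) × Fin n) (Fin (N+1) × Fin n) ℝ}
    (hS : StrictBlockLT S) (hT : StrictBlockLT T) : StrictBlockLT (S + T) := by
  intro i j a b h
  simp [hS i j a b h, hT i j a b h]

lemma strict_mul_lt {p q r : ℕ} {M : Matrix (Fin (N+1) × Fin p) (Fin (N+1) × Fin q) ℝ}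
    {X : Matrix (Fin (N+1) × Fin q) (Fin (N+1) × Fin r) ℝ}
    (hM : StrictBlockLT M) (hX : BlockLT X) : StrictBlockLT (M * X) := by
  intro i j a b hij
  rw [Matrix.mul_apply]
  apply Finset.sum_eq_zero
  rintro ⟨k, c⟩ -
  by_cases hk : i ≤ k
  · rw [hM i k a c hk, zero_mul]
  · rw [hX k j c b (lt_of_lt_of_le (lt_of_not_ge hk) hij), mul_zero]

lemma lt_mul_lt {p q r : ℕ} {M : Matrix (Fin (N+1) × Fin p) (Fin (N+1) × Fin q) ℝ}
    {X : Matrix (Fin (N+1) × Fin q) (Fin (N+1) × Fin r) ℝ}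
    (hM : BlockLT M) (hX : BlockLT X) : BlockLT (M * X) := by
  intro i j a b hij
  rw [Matrix.mul_apply]
  apply Finset.sum_eq_zero
  rintro ⟨k, c⟩ -
  by_cases hk : i < k
  · rw [hM i k a c hk, zero_mul]
  · rw [hX k j c b (lt_of_le_of_lt (not_lt.mp hk) hij), mul_zero]

lemma strict_Z_mul {q : ℕ} {D : Matrix (Fin (N+1) × Fin n) (Fin (N+1) × Fin q) ℝ}
    (hD : ∀ p r, p.1 ≠ r.1 → D p r = 0) : StrictBlockLT (downshift N n * D) := by
  intro i j a b hij
  rw [Matrix.mul_apply]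
  apply Finset.sum_eq_zero
  rintro ⟨k, c⟩ -
  by_cases h1 : ((i : ℕ) = (k : ℕ) + 1 ∧ a = c)
  · by_cases h2 : k = j
    · exfalso
      have hle : (i : ℕ) ≤ (j : ℕ) := hij
      have : (k : ℕ) = (j : ℕ) := by rw [h2]
      omega
    · rw [hD (k, c) (j, b) h2, mul_zero]
  · show (if ((i : ℕ) = (k : ℕ) + 1 ∧ a = c) then (1:ℝ) else 0) * _ = 0
    rw [if_neg h1, zero_mul]

lemma dg_mul_strict (C : Fin (N+1) → Matrix (Fin n) (Fin n) ℝ)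
    {S : Matrix (Fin (N+1) × Fin n) (Fin (N+1) × Fin n) ℝ} (hS : StrictBlockLT S) :
    StrictBlockLT (dg C * S) := by
  intro i j a b hij
  rw [Matrix.mul_apply]
  apply Finset.sum_eq_zero
  rintro ⟨k, c⟩ -
  by_cases hk : i = k
  · subst hk; rw [hS i j c b hij, mul_zero]
  · show (if (i = k) then _ else 0) * _ = 0
    rw [if_neg hk, zero_mul]

lemma strict_pow {S : Matrix (Fin (N+1) × Fin n) (Fin (N+1) × Fin n) ℝ}
    (hS : StrictBlockLT S) :
    ∀ k (p q : Fin (N+1) × Fin n), (p.1 : ℕ) < (q.1 : ℕ) + k → (S ^ k) p q = 0 := by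
  intro k
  induction k with
  | zero =>
    intro p q h
    have hne : p ≠ q := by
      rintro rfl; omega
    simp [Matrix.one_apply_ne hne]
  | succ k ih =>
    intro p q h
    rw [pow_succ']
    rw [Matrix.mul_apply]
    apply Finset.sum_eq_zero
    rintro ⟨r1, r2⟩ -
    by_cases hr : p.1 ≤ r1
    · rw [show S p (r1, r2) = 0 from hS p.1 r1 p.2 r2 hr, zero_mul]
    · have hlt : (r1 : ℕ) < (p.1 : ℕ) := lt_of_not_ge hr
      rw [ih (r1, r2) q (by simpa using by omega : ((r1, r2).1 : ℕ) < (q.1 : ℕ) + k), mul_zero]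

lemma strict_nilpotent {S : Matrix (Fin (N+1) × Fin n) (Fin (N+1) × Fin n) ℝ}
    (hS : StrictBlockLT S) : S ^ (N + 1) = 0 := by
  ext p q
  rw [strict_pow hS (N+1) p q (by have := p.1.isLt; omega)]
  rfl

lemma blockLT_iff_blockTriangular {M : Matrix (Fin (N+1) × Fin n) (Fin (N+1) × Fin n) ℝ} :
    BlockLT M ↔ Matrix.BlockTriangular M (fun p => OrderDual.toDual p.1) := by
  constructor
  · intro h i j hij
    exact h i.1 j.1 i.2 j.2 (by exact_mod_cast hij)
  · intro h i j a b hij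
    exact h (show OrderDual.toDual j < OrderDual.toDual i from hij)

end Stmt3Aux

/-- Proposition 1(b), converse part of the system level parameterisation. -/
theorem stmt3 (n m N : ℕ) (hN : 1 ≤ N)
    (A : Matrix (Fin n) (Fin n) ℝ) (B : Matrix (Fin n) (Fin m) ℝ)
    (Bw : Matrix (Fin n) (Fin n) ℝ) (hBw : IsUnit Bw)
    (Φx : Matrix (Fin (N+1) × Fin n) (Fin (N+1) × Fin n) ℝ)
    (Φu : Matrix (Fin (N+1) × Fin m) (Fin (N+1) × Fin n) ℝ)
    (hΦx : BlockLT Φx) (hΦu : BlockLT Φu)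
    (hSLP : (1 - downshift N n * blkDiagA N A) * Φx - downshift N n * blkDiagB N B * Φu
      = blkDiagE N Bw) :
    IsUnit Φx ∧ BlockLT (Φu * Φx⁻¹) ∧
    ∀ δ : Fin (N+1) × Fin n → ℝ,
      (Φx *ᵥ δ = (downshift N n * blkDiagA N A) *ᵥ (Φx *ᵥ δ)
          + (downshift N n * blkDiagB N B) *ᵥ (Φu *ᵥ δ) + blkDiagE N Bw *ᵥ δ) ∧
      Φu *ᵥ δ = (Φu * Φx⁻¹) *ᵥ (Φx *ᵥ δ) := by
  classical
  set Z := downshift N n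
  set P := Z * blkDiagA N A with hP
  set Q := Z * blkDiagB N B with hQ
  set E := blkDiagE N Bw with hE
  have hdetBw : IsUnit Bw.det := (Matrix.isUnit_iff_isUnit_det Bw).mp hBw
  -- rearrange the SLP equation
  have hΦxeq : Φx = P * Φx + Q * Φu + E := by
    rw [sub_mul, one_mul] at hSLP
    rw [← hSLP]; abel
  -- the strictly block lower part
  set S := P * Φx + Q * Φu with hSdef
  have hPdiagA : ∀ p r : Fin (N+1) × Fin n, p.1 ≠ r.1 → blkDiagA N A p r = 0 := by
    intro p r h; simp [blkDiagA, h]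
  have hQdiagB : ∀ (p : Fin (N+1) × Fin n) (r : Fin (N+1) × Fin m), p.1 ≠ r.1 →
      blkDiagB N B p r = 0 := by
    intro p r h; simp [blkDiagB, h]
  have hSstrict : StrictBlockLT S :=
    strict_add (strict_mul_lt (strict_Z_mul hPdiagA) hΦx)
      (strict_mul_lt (strict_Z_mul hQdiagB) hΦu)
  -- E is invertible with explicit inverse E'
  set E' := blkDiagE N Bw⁻¹ with hE'
  have hEE' : E * E' = 1 := by
    rw [hE, hE', E_eq_dg, E_eq_dg, dg_mul]
    have hfun : (fun k : Fin (N+1) =>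
        (if (k : ℕ) = 0 then (1 : Matrix (Fin n) (Fin n) ℝ) else Bw) *
          (if (k : ℕ) = 0 then 1 else Bw⁻¹)) = fun _ => 1 := by
      funext k
      by_cases h0 : (k : ℕ) = 0 <;> simp [h0, Matrix.mul_nonsing_inv Bw hdetBw]
    rw [hfun, dg_one]
  have hEunit : IsUnit E := by
    rw [Matrix.isUnit_iff_isUnit_det]
    have : E.det * E'.det = 1 := by rw [← Matrix.det_mul, hEE', Matrix.det_one]
    exact IsUnit.of_mul_eq_one _ this
  -- the factorisation Φx = E * (1 + E' * S)
  have hTstrict : StrictBlockLT (E' * S) := by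
    rw [hE', E_eq_dg]
    exact dg_mul_strict _ hSstrict
  have hTnil : IsNilpotent (E' * S) := ⟨N + 1, strict_nilpotent hTstrict⟩
  have hfac : Φx = E * (1 + E' * S) := by
    rw [mul_add, mul_one, ← mul_assoc, hEE', one_mul, hΦxeq]
    abel
  have hΦxU : IsUnit Φx := by
    rw [hfac]
    exact hEunit.mul hTnil.isUnit_one_add
  have hdetΦx : IsUnit Φx.det := (Matrix.isUnit_iff_isUnit_det Φx).mp hΦxU
  -- inverse is block lower triangular
  have hΦxinvLT : BlockLT Φx⁻¹ := by
    obtain ⟨inst⟩ := hΦxU.nonempty_invertible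
    rw [blockLT_iff_blockTriangular]
    exact Matrix.blockTriangular_inv_of_blockTriangular
      (blockLT_iff_blockTriangular.mp hΦx)
  refine ⟨hΦxU, lt_mul_lt hΦu hΦxinvLT, fun δ => ⟨?_, ?_⟩⟩
  · conv_lhs => rw [hΦxeq]
    rw [Matrix.mulVec_mulVec, Matrix.mulVec_mulVec, Matrix.add_mulVec, Matrix.add_mulVec]
  · rw [Matrix.mulVec_mulVec, Matrix.mul_assoc, Matrix.nonsing_inv_mul Φx hdetΦx, Matrix.mul_one]
end
end

section
/- Proposition 2, sufficiency direction: let A ∈ ℝ^{n×n}, B ∈ ℝ^{n×m}, B_w ∈ ℝ^{n×n} invertible, P_init ∈ ℝ^{n×n}, and let X = {x : ⟨A_{x,j}, x⟩ ≤ b_{x,j}, j = 1,…,n_x} and U = {u : ⟨A_{u,j}, u⟩ ≤ b_{u,j}, j = 1,…,n_u}. Suppose Φ_x ∈ L^{N,n×n} and Φ_u ∈ L^{N,m×n} satisfy the system level subspace equation (I − Z𝒜)Φ_x − ZℬΦ_u = ℰ, vectors z₀,…,z_N ∈ ℝⁿ and v₀,…,v_{N−1} ∈ ℝᵐ satisfy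 z_{k+1} = A z_k + B v_k, and the tightened constraints hold: for all k = 0,…,N−1, ⟨A_{x,j}, z_k⟩ + ‖(Φ_{x,0}^k P_init)ᵀ A_{x,j}‖₁ + ‖(Φ_{x,w}^k)ᵀ A_{x,j}‖₁ ≤ b_{x,j} for all j, and ⟨A_{u,j}, v_k⟩ + ‖(Φ_{u,0}^k P_init)ᵀ A_{u,j}‖₁ + ‖(Φ_{u,w}^k)ᵀ A_{u,j}‖₁ ≤ b_{u,j} for all j. Set K := Φ_u Φ_x⁻¹. Then for every Δx₀ ∈ P_init·B∞ⁿ and every disturbance sequence w₀,…,w_{N−1} ∈ B∞ⁿ, the trajectory defined by x₀ = z₀ + Δx₀, u_k = v_k + Σ_{i=0}^{k} K^{k,i}(x_{k−i} − z_{k−i}), x_{k+1} = A x_k + B u_k + B_w w_k satisfies x_k ∈ X and u_k ∈ U for all k = 0,…,N−1. -/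
open Matrix Finset Pointwise

noncomputable section

lemma dot_le_sum_abs {ι : Type*} [Fintype ι] (c s : ι → ℝ) (hs : ∀ i, |s i| ≤ 1) :
    c ⬝ᵥ s ≤ ∑ i, |c i| := by
  rw [dotProduct]
  refine Finset.sum_le_sum fun i _ => ?_
  calc c i * s i ≤ |c i * s i| := le_abs_self _
    _ = |c i| * |s i| := abs_mul _ _
    _ ≤ |c i| * 1 := mul_le_mul_of_nonneg_left (hs i) (abs_nonneg _)
    _ = |c i| := mul_one _

lemma downshift_mul_zero {N n : ℕ} {ι : Type*} [Fintype ι]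
    (M : Matrix (Fin (N+1) × Fin n) ι ℝ) (a : Fin n) (q : ι) :
    (downshift N n * M) ((0 : Fin (N+1)), a) q = 0 := by
  rw [Matrix.mul_apply]
  apply Finset.sum_eq_zero
  rintro ⟨r, d⟩ -
  rw [downshift, if_neg, zero_mul]
  rintro ⟨h1, -⟩
  simp at h1

lemma downshift_mul_succ {N n : ℕ} {ι : Type*} [Fintype ι]
    (M : Matrix (Fin (N+1) × Fin n) ι ℝ) (k : Fin N) (a : Fin n) (q : ι) :
    (downshift N n * M) (k.succ, a) q = M (k.castSucc, a) q := by
  rw [Matrix.mul_apply, Fintype.sum_prod_type]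
  rw [Finset.sum_eq_single k.castSucc]
  · rw [Finset.sum_eq_single a]
    · rw [downshift, if_pos (by simp), one_mul]
    · intro d _ hd
      rw [downshift, if_neg, zero_mul]
      rintro ⟨-, h2⟩; exact hd h2.symm
    · simp
  · intro r _ hr
    apply Finset.sum_eq_zero; intro d _
    rw [downshift, if_neg, zero_mul]
    rintro ⟨h1, -⟩
    apply hr
    apply Fin.ext
    simp only [Fin.val_succ] at h1
    simp [Fin.coe_castSucc]
    omega
  · simp

lemma blkDiagA_mul {N n : ℕ} {ι : Type*} [Fintype ι] (A : Matrix (Fin n) (Fin n) ℝ)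
    (M : Matrix (Fin (N+1) × Fin n) ι ℝ) (r : Fin (N+1)) (hr : (r : ℕ) < N) (a : Fin n) (q : ι) :
    (blkDiagA N A * M) (r, a) q = ∑ c, A a c * M (r, c) q := by
  rw [Matrix.mul_apply, Fintype.sum_prod_type]
  rw [Finset.sum_eq_single r]
  · apply Finset.sum_congr rfl; intro c _
    rw [blkDiagA, if_pos ⟨rfl, hr⟩]
  · intro s _ hs
    apply Finset.sum_eq_zero; intro c _
    rw [blkDiagA, if_neg, zero_mul]
    rintro ⟨h, -⟩; exact hs h.symm
  · simp

lemma blkDiagB_mul {N n m : ℕ} {ι : Type*} [Fintype ι] (B : Matrix (Fin n) (Fin m) ℝ)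
    (M : Matrix (Fin (N+1) × Fin m) ι ℝ) (r : Fin (N+1)) (hr : (r : ℕ) < N) (a : Fin n) (q : ι) :
    (blkDiagB N B * M) (r, a) q = ∑ c, B a c * M (r, c) q := by
  rw [Matrix.mul_apply, Fintype.sum_prod_type]
  rw [Finset.sum_eq_single r]
  · apply Finset.sum_congr rfl; intro c _
    rw [blkDiagB, if_pos ⟨rfl, hr⟩]
  · intro s _ hs
    apply Finset.sum_eq_zero; intro c _
    rw [blkDiagB, if_neg, zero_mul]
    rintro ⟨h, -⟩; exact hs h.symm
  · simp

lemma fsub {N p : ℕ} {M : Matrix (Fin (N+1) × Fin p) (Fin (N+1) × Fin p) ℝ}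
    (hM : BlockLT M)
    (hdiag : ∀ (k : Fin (N+1)) (y : Fin p → ℝ), (blk M k k) *ᵥ y = 0 → y = 0)
    (y : Fin (N+1) × Fin p → ℝ) (J : ℕ)
    (hc : ∀ (i : Fin (N+1)), (i : ℕ) < J → ∀ a, (M *ᵥ y) (i, a) = 0) :
    ∀ (i : Fin (N+1)), (i : ℕ) < J → ∀ a, y (i, a) = 0 := by
  have key : ∀ t : ℕ, ∀ i : Fin (N+1), (i : ℕ) = t → (i : ℕ) < J → ∀ a, y (i, a) = 0 := by
    intro t
    induction t using Nat.strong_induction_on with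
    | _ t IH =>
      intro i hit hiJ
      have hv : (blk M i i) *ᵥ (fun b => y (i, b)) = 0 := by
        funext a₀
        have h0 := hc i hiJ a₀
        rw [show (M *ᵥ y) (i, a₀) = ∑ j : Fin (N+1), ∑ b, M (i, a₀) (j, b) * y (j, b) from by
          rw [Matrix.mulVec, dotProduct, Fintype.sum_prod_type]] at h0
        rw [Finset.sum_eq_single i] at h0
        · simpa [Matrix.mulVec, dotProduct, blk] using h0
        · intro j _ hj
          rcases lt_or_gt_of_ne hj with h | h
          · apply Finset.sum_eq_zero; intro b _
            rw [IH (j : ℕ) (by omega) j rfl (by omega), mul_zero]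
          · apply Finset.sum_eq_zero; intro b _
            rw [hM i j a₀ b h, zero_mul]
        · simp
      have h := hdiag i _ hv
      intro a
      exact congrFun h a
  intro i hi
  exact key (i : ℕ) i rfl hi

/-- Proposition 2, sufficiency direction. -/
theorem stmt9 (n m N nx nu : ℕ) (hN : 1 ≤ N)
    (A : Matrix (Fin n) (Fin n) ℝ) (B : Matrix (Fin n) (Fin m) ℝ)
    (Bw : Matrix (Fin n) (Fin n) ℝ) (hBw : IsUnit Bw)
    (Pinit : Matrix (Fin n) (Fin n) ℝ)
    (Ax : Fin nx → Fin n → ℝ) (bx : Fin nx → ℝ)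
    (Au : Fin nu → Fin m → ℝ) (bu : Fin nu → ℝ)
    (Φx : Matrix (Fin (N+1) × Fin n) (Fin (N+1) × Fin n) ℝ)
    (Φu : Matrix (Fin (N+1) × Fin m) (Fin (N+1) × Fin n) ℝ)
    (hΦx : BlockLT Φx) (hΦu : BlockLT Φu)
    (hSLP : (1 - downshift N n * blkDiagA N A) * Φx - downshift N n * blkDiagB N B * Φu
      = blkDiagE N Bw)
    (z : Fin (N+1) → Fin n → ℝ) (v : Fin N → Fin m → ℝ)
    (hz : ∀ k : Fin N, z k.succ = A *ᵥ z k.castSucc + B *ᵥ v k)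
    (htx : ∀ (k : Fin N) (j : Fin nx),
      Ax j ⬝ᵥ z k.castSucc + (∑ i, |((blk Φx k.castSucc 0 * Pinit)ᵀ *ᵥ Ax j) i|)
        + (∑ q, |((blkRowW Φx k.castSucc)ᵀ *ᵥ Ax j) q|) ≤ bx j)
    (htu : ∀ (k : Fin N) (j : Fin nu),
      Au j ⬝ᵥ v k + (∑ i, |((blk Φu k.castSucc 0 * Pinit)ᵀ *ᵥ Au j) i|)
        + (∑ q, |((blkRowW Φu k.castSucc)ᵀ *ᵥ Au j) q|) ≤ bu j)
    (K : Matrix (Fin (N+1) × Fin m) (Fin (N+1) × Fin n) ℝ) (hKdef : K = Φu * Φx⁻¹)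
    (Δx₀ : Fin n → ℝ) (hΔ : Δx₀ ∈ Matrix.mulVec Pinit '' Binf (Fin n))
    (w : Fin N → Fin n → ℝ) (hw : ∀ k, w k ∈ Binf (Fin n))
    (x : Fin (N+1) → Fin n → ℝ) (u : Fin N → Fin m → ℝ)
    (hx0 : x 0 = z 0 + Δx₀)
    (hu : ∀ k : Fin N, u k = v k + ∑ j : Fin (N+1),
        if (j : ℕ) ≤ (k : ℕ) then (blk K k.castSucc j) *ᵥ (x j - z j) else 0)
    (hdyn : ∀ k : Fin N, x k.succ = A *ᵥ x k.castSucc + B *ᵥ u k + Bw *ᵥ w k) :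
    ∀ k : Fin N, (∀ j, Ax j ⬝ᵥ x k.castSucc ≤ bx j) ∧ (∀ j, Au j ⬝ᵥ u k ≤ bu j) := by
  classical
  obtain ⟨ξ, hξ, hξeq⟩ := hΔ
  -- row equations from the SLP equation
  have hrow0 : ∀ (a : Fin n) (q : Fin (N+1) × Fin n),
      Φx ((0 : Fin (N+1)), a) q = blkDiagE N Bw ((0 : Fin (N+1)), a) q := by
    intro a q
    have h := congrFun (congrFun hSLP ((0 : Fin (N+1)), a)) q
    rw [Matrix.sub_apply, Matrix.sub_mul, Matrix.one_mul, Matrix.sub_apply,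
      Matrix.mul_assoc (downshift N n) (blkDiagA N A) Φx,
      Matrix.mul_assoc (downshift N n) (blkDiagB N B) Φu,
      downshift_mul_zero, downshift_mul_zero] at h
    linarith
  have hrowS : ∀ (k : Fin N) (a : Fin n) (q : Fin (N+1) × Fin n),
      Φx (k.succ, a) q = (∑ c, A a c * Φx (k.castSucc, c) q)
        + (∑ c, B a c * Φu (k.castSucc, c) q) + blkDiagE N Bw (k.succ, a) q := by
    intro k a q
    have h := congrFun (congrFun hSLP (k.succ, a)) q
    rw [Matrix.sub_apply, Matrix.sub_mul, Matrix.one_mul, Matrix.sub_apply,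
      Matrix.mul_assoc (downshift N n) (blkDiagA N A) Φx,
      Matrix.mul_assoc (downshift N n) (blkDiagB N B) Φu,
      downshift_mul_succ, downshift_mul_succ,
      blkDiagA_mul A Φx k.castSucc (by simpa using k.isLt) a q,
      blkDiagB_mul B Φu k.castSucc (by simpa using k.isLt) a q] at h
    linarith
  -- diagonal blocks
  have hdiag0 : ∀ a b, Φx ((0 : Fin (N+1)), a) ((0 : Fin (N+1)), b) = if a = b then 1 else 0 := by
    intro a b
    rw [hrow0]
    simp [blkDiagE]
  have hdiagS : ∀ (k : Fin N) (a b : Fin n), Φx (k.succ, a) (k.succ, b) = Bw a b := by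
    intro k a b
    rw [hrowS]
    have h1 : ∀ c, Φx (k.castSucc, c) (k.succ, b) = 0 :=
      fun c => hΦx _ _ _ _ Fin.castSucc_lt_succ
    have h2 : ∀ c, Φu (k.castSucc, c) (k.succ, b) = 0 :=
      fun c => hΦu _ _ _ _ Fin.castSucc_lt_succ
    simp [h1, h2, blkDiagE, Fin.val_succ]
  have hdiagInj : ∀ (k : Fin (N+1)) (y : Fin n → ℝ), (blk Φx k k) *ᵥ y = 0 → y = 0 := by
    intro k
    induction k using Fin.cases with
    | zero =>
      intro y hy
      have h1 : blk Φx 0 0 = (1 : Matrix (Fin n) (Fin n) ℝ) := by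
        ext a b
        rw [blk, hdiag0, Matrix.one_apply]
      rwa [h1, Matrix.one_mulVec] at hy
    | succ k =>
      intro y hy
      have hB : blk Φx k.succ k.succ = Bw := by
        ext a b
        rw [blk, hdiagS]
      rw [hB] at hy
      have hd : IsUnit Bw.det := (Matrix.isUnit_iff_isUnit_det Bw).mp hBw
      calc y = (Bw⁻¹ * Bw) *ᵥ y := by rw [Matrix.nonsing_inv_mul Bw hd, Matrix.one_mulVec]
        _ = Bw⁻¹ *ᵥ (Bw *ᵥ y) := (Matrix.mulVec_mulVec y Bw⁻¹ Bw).symm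
        _ = 0 := by rw [hy, Matrix.mulVec_zero]
  have hdet : IsUnit Φx.det := by
    rw [isUnit_iff_ne_zero]
    intro h0
    obtain ⟨vv, hv0, hv⟩ := Matrix.exists_mulVec_eq_zero_iff.mpr h0
    apply hv0
    funext q
    obtain ⟨i, a⟩ := q
    exact fsub hΦx hdiagInj vv (N+1) (fun i _ a => by rw [hv]; rfl) i i.isLt a
  have hKPhi : K * Φx = Φu := by
    rw [hKdef, Matrix.mul_assoc, Matrix.nonsing_inv_mul Φx hdet, Matrix.mul_one]
  have hInvLT : ∀ (i j : Fin (N+1)) (a b : Fin n), i < j → Φx⁻¹ (i, a) (j, b) = 0 := by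
    intro i j a b hij
    have hy : Φx *ᵥ (Φx⁻¹ *ᵥ Pi.single ((j, b)) (1:ℝ)) = Pi.single (j, b) 1 := by
      rw [Matrix.mulVec_mulVec, Matrix.mul_nonsing_inv Φx hdet, Matrix.one_mulVec]
    have h := fsub hΦx hdiagInj (Φx⁻¹ *ᵥ Pi.single ((j, b)) (1:ℝ)) (j : ℕ)
      (fun i' hi' a' => by
        rw [hy]
        refine Pi.single_eq_of_ne ?_ 1
        intro hq
        rw [Prod.mk.injEq] at hq
        rw [hq.1] at hi'
        omega) i hij a
    rw [Matrix.mulVec_single] at h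
    simpa using h
  have hKLT : ∀ (i : Fin (N+1)) (a : Fin m) (j : Fin (N+1)) (b : Fin n),
      i < j → K (i, a) (j, b) = 0 := by
    intro i a j b hij
    rw [hKdef, Matrix.mul_apply]
    apply Finset.sum_eq_zero
    rintro ⟨l, c⟩ -
    rcases lt_or_ge i l with h | h
    · rw [hΦu i l a c h, zero_mul]
    · rw [hInvLT l j c b (lt_of_le_of_lt h hij), mul_zero]
  -- the stacked disturbance vector
  set wv : Fin (N+1) × Fin n → ℝ :=
    fun q => Fin.cases (motive := fun _ => ℝ) (Δx₀ q.2) (fun l => w l q.2) q.1 with hwvdef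
  have hwv0 : ∀ a, wv ((0 : Fin (N+1)), a) = Δx₀ a := fun a => by simp [hwvdef]
  have hwvS : ∀ (l : Fin N) (a : Fin n), wv (l.succ, a) = w l a := fun l a => by simp [hwvdef]
  -- the control deviation identity (given state deviation identities up to k)
  have hU : ∀ (k : Fin N),
      (∀ j : Fin (N+1), (j : ℕ) ≤ (k : ℕ) → ∀ a, x j a - z j a = (Φx *ᵥ wv) (j, a)) →
      ∀ a, u k a - v k a = (Φu *ᵥ wv) (k.castSucc, a) := by
    intro k hIH a
    rw [hu k]
    simp only [Pi.add_apply, Finset.sum_apply]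
    rw [add_sub_cancel_left]
    have hterm : ∀ j : Fin (N+1),
        (if (j : ℕ) ≤ (k : ℕ) then (blk K k.castSucc j) *ᵥ (x j - z j) else 0) a
          = ∑ b, K (k.castSucc, a) (j, b) * (Φx *ᵥ wv) (j, b) := by
      intro j
      by_cases hj : (j : ℕ) ≤ (k : ℕ)
      · rw [if_pos hj]
        have hxz : (x j - z j) = fun b => (Φx *ᵥ wv) (j, b) :=
          funext fun b => by rw [Pi.sub_apply, hIH j hj b]
        rw [hxz]
        rfl
      · rw [if_neg hj]
        symm
        apply Finset.sum_eq_zero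
        intro b _
        rw [hKLT k.castSucc a j b (by rw [Fin.lt_def]; simp; omega), zero_mul]
    calc (∑ j : Fin (N+1),
        (if (j : ℕ) ≤ (k : ℕ) then (blk K k.castSucc j) *ᵥ (x j - z j) else 0) a)
        = ∑ j : Fin (N+1), ∑ b, K (k.castSucc, a) (j, b) * (Φx *ᵥ wv) (j, b) :=
          Finset.sum_congr rfl fun j _ => hterm j
      _ = (K *ᵥ (Φx *ᵥ wv)) (k.castSucc, a) := by
          rw [Matrix.mulVec, dotProduct, Fintype.sum_prod_type]
      _ = (Φu *ᵥ wv) (k.castSucc, a) := by rw [Matrix.mulVec_mulVec, hKPhi]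
  -- the state deviation identity
  have hX : ∀ (k : Fin (N+1)) (a : Fin n), x k a - z k a = (Φx *ᵥ wv) (k, a) := by
    have key : ∀ t : ℕ, ∀ k : Fin (N+1), (k : ℕ) = t →
        ∀ a, x k a - z k a = (Φx *ᵥ wv) (k, a) := by
      intro t
      induction t using Nat.strong_induction_on with
      | _ t IH =>
        intro k hkt a
        rcases Fin.eq_zero_or_eq_succ k with rfl | ⟨k', rfl⟩
        · -- base case k = 0
          have h1 : (Φx *ᵥ wv) ((0 : Fin (N+1)), a) = Δx₀ a := by
            rw [Matrix.mulVec, dotProduct, Fintype.sum_prod_type, Fin.sum_univ_succ]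
            have hz2 : ∀ j : Fin N,
                (∑ b, Φx ((0 : Fin (N+1)), a) (j.succ, b) * wv (j.succ, b)) = 0 := by
              intro j
              apply Finset.sum_eq_zero
              intro b _
              rw [hΦx 0 j.succ a b (Fin.succ_pos j), zero_mul]
            rw [Finset.sum_eq_zero (fun j _ => hz2 j), add_zero]
            have hval : ∀ b, Φx ((0 : Fin (N+1)), a) ((0 : Fin (N+1)), b)
                = if a = b then 1 else 0 := hdiag0 a
            simp [hval, ite_mul, hwv0]
          rw [hx0, h1]
          simp
        · -- inductive step k = succ k'
          have hk't : (k' : ℕ) + 1 = t := by simpa using hkt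
          have IHle : ∀ j : Fin (N+1), (j : ℕ) ≤ (k' : ℕ) →
              ∀ a', x j a' - z j a' = (Φx *ᵥ wv) (j, a') := by
            intro j hj a'
            exact IH (j : ℕ) (by omega) j rfl a'
          have hUk := hU k' IHle
          have hXk : ∀ c, x k'.castSucc c - z k'.castSucc c = (Φx *ᵥ wv) (k'.castSucc, c) :=
            fun c => IHle k'.castSucc (by simp) c
          -- RHS expansion
          have hRHS : (Φx *ᵥ wv) (k'.succ, a)
              = (∑ c, A a c * (Φx *ᵥ wv) (k'.castSucc, c))
                + (∑ c, B a c * (Φu *ᵥ wv) (k'.castSucc, c))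
                + ∑ b, Bw a b * w k' b := by
            rw [Matrix.mulVec, dotProduct]
            have hexp : ∀ q : Fin (N+1) × Fin n,
                Φx (k'.succ, a) q * wv q
                  = (∑ c, A a c * (Φx (k'.castSucc, c) q * wv q))
                    + (∑ c, B a c * (Φu (k'.castSucc, c) q * wv q))
                    + blkDiagE N Bw (k'.succ, a) q * wv q := by
              intro q
              rw [hrowS k' a q, add_mul, add_mul, Finset.sum_mul, Finset.sum_mul]
              congr 1
              congr 1
              · exact Finset.sum_congr rfl fun c _ => by ring
              · exact Finset.sum_congr rfl fun c _ => by ring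
            rw [Finset.sum_congr rfl fun q _ => hexp q]
            rw [Finset.sum_add_distrib, Finset.sum_add_distrib]
            congr 1
            congr 1
            · rw [Finset.sum_comm]
              refine Finset.sum_congr rfl fun c _ => ?_
              rw [← Finset.mul_sum]
              rfl
            · rw [Finset.sum_comm]
              refine Finset.sum_congr rfl fun c _ => ?_
              rw [← Finset.mul_sum]
              rfl
            · -- the E-term
              rw [Fintype.sum_prod_type, Fin.sum_univ_succ]
              have h00 : (∑ b, blkDiagE N Bw (k'.succ, a) ((0 : Fin (N+1)), b)
                  * wv ((0 : Fin (N+1)), b)) = 0 := by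
                apply Finset.sum_eq_zero
                intro b _
                rw [blkDiagE, if_neg, zero_mul]
                intro hh
                have : (k'.succ : ℕ) = (0 : Fin (N+1)) := congrArg Fin.val hh
                simp at this
              rw [h00, zero_add]
              rw [Finset.sum_eq_single k']
              · refine Finset.sum_congr rfl fun b _ => ?_
                rw [hwvS, blkDiagE, if_pos rfl, if_neg (by simp)]
              · intro l _ hl
                apply Finset.sum_eq_zero
                intro b _
                rw [blkDiagE, if_neg, zero_mul]
                intro hh
                have hh' : k'.succ = l.succ := hh
                exact hl (Fin.succ_injective N hh'.symm)
              · simp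
          rw [hRHS]
          have hxx := hdyn k'
          have hzz := hz k'
          have e1 : x k'.succ a = (A *ᵥ x k'.castSucc) a + (B *ᵥ u k') a + (Bw *ᵥ w k') a := by
            rw [hxx]; simp
          have e2 : z k'.succ a = (A *ᵥ z k'.castSucc) a + (B *ᵥ v k') a := by
            rw [hzz]; simp
          rw [e1, e2]
          have e3 : (A *ᵥ x k'.castSucc) a - (A *ᵥ z k'.castSucc) a
              = ∑ c, A a c * (Φx *ᵥ wv) (k'.castSucc, c) := by
            simp only [Matrix.mulVec, dotProduct]
            rw [← Finset.sum_sub_distrib]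
            refine Finset.sum_congr rfl fun c _ => ?_
            rw [← mul_sub, hXk c]
            rfl
          have e4 : (B *ᵥ u k') a - (B *ᵥ v k') a
              = ∑ c, B a c * (Φu *ᵥ wv) (k'.castSucc, c) := by
            simp only [Matrix.mulVec, dotProduct]
            rw [← Finset.sum_sub_distrib]
            refine Finset.sum_congr rfl fun c _ => ?_
            rw [← mul_sub, hUk c]
            rfl
          have e5 : (Bw *ᵥ w k') a = ∑ b, Bw a b * w k' b := rfl
          linarith
    intro k a
    exact key (k : ℕ) k rfl a
  -- the deviation decomposition into initial-state and disturbance parts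
  have wf : Fin N × Fin n → ℝ := fun q => w q.1 q.2
  have hdecomp : ∀ (p : ℕ) (Φ : Matrix (Fin (N+1) × Fin p) (Fin (N+1) × Fin n) ℝ)
      (k : Fin (N+1)),
      (fun c => (Φ *ᵥ wv) (k, c))
        = (blk Φ k 0 * Pinit) *ᵥ ξ + (blkRowW Φ k) *ᵥ (fun q : Fin N × Fin n => w q.1 q.2) := by
    intro p Φ k
    funext c
    rw [Pi.add_apply, Matrix.mulVec, dotProduct, Fintype.sum_prod_type,
      Fin.sum_univ_succ]
    congr 1
    · rw [← Matrix.mulVec_mulVec]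
      rw [Matrix.mulVec, dotProduct]
      refine Finset.sum_congr rfl fun b _ => ?_
      rw [hwv0 b, ← hξeq]
      rfl
    · rw [Matrix.mulVec, dotProduct, Fintype.sum_prod_type]
      refine Finset.sum_congr rfl fun l _ => Finset.sum_congr rfl fun b _ => ?_
      rw [hwvS l b]
      rfl
  -- bound on the contribution of the deviation
  have hbound : ∀ (p : ℕ) (Φ : Matrix (Fin (N+1) × Fin p) (Fin (N+1) × Fin n) ℝ)
      (k : Fin (N+1)) (Ac : Fin p → ℝ),
      Ac ⬝ᵥ (fun c => (Φ *ᵥ wv) (k, c))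
        ≤ (∑ i, |((blk Φ k 0 * Pinit)ᵀ *ᵥ Ac) i|) + ∑ q, |((blkRowW Φ k)ᵀ *ᵥ Ac) q| := by
    intro p Φ k Ac
    rw [hdecomp p Φ k, dotProduct_add]
    have b1 : Ac ⬝ᵥ ((blk Φ k 0 * Pinit) *ᵥ ξ) ≤ ∑ i, |((blk Φ k 0 * Pinit)ᵀ *ᵥ Ac) i| := by
      rw [Matrix.dotProduct_mulVec, ← Matrix.mulVec_transpose]
      exact dot_le_sum_abs _ ξ hξ
    have b2 : Ac ⬝ᵥ ((blkRowW Φ k) *ᵥ (fun q : Fin N × Fin n => w q.1 q.2))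
        ≤ ∑ q, |((blkRowW Φ k)ᵀ *ᵥ Ac) q| := by
      rw [Matrix.dotProduct_mulVec, ← Matrix.mulVec_transpose]
      exact dot_le_sum_abs _ _ fun q => hw q.1 q.2
    linarith
  -- conclusion
  intro k
  constructor
  · intro j
    have hxs : x k.castSucc = z k.castSucc + fun c => (Φx *ᵥ wv) (k.castSucc, c) := by
      funext c
      have := hX k.castSucc c
      simp only [Pi.add_apply]
      linarith
    rw [hxs, dotProduct_add]
    have := hbound n Φx k.castSucc (Ax j)
    have := htx k j
    linarith
  · intro j
    have hus : u k = v k + fun a => (Φu *ᵥ wv) (k.castSucc, a) := by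
      funext a
      have := hU k (fun j _ a' => hX j a') a
      simp only [Pi.add_apply]
      linarith
    rw [hus, dotProduct_add]
    have := hbound m Φu k.castSucc (Au j)
    have := htu k j
    linarith
end
end

section
/- Proposition 2, necessity direction: let A ∈ ℝ^{n×n}, B ∈ ℝ^{n×m}, B_w ∈ ℝ^{n×n}, P_init ∈ ℝ^{n×n}, half-space data (A_{x,j}, b_{x,j}), j = 1,…,n_x and (A_{u,j}, b_{u,j}), j = 1,…,n_u, a block lower triangular feedback K ∈ L^{N,m×n}, and nominal vectors z₀,…,z_N, v₀,…,v_{N−1} with z_{k+1} = A z_k + B v_k. Define Φ_x := (I − Z(𝒜 + ℬK))⁻¹ℰ and Φ_u := KΦ_x. If for every Δx₀ ∈ P_init·B∞ⁿ and every disturbance sequence w₀,…,w_{N−1} ∈ B∞ⁿ, the closed-loop trajectory x₀ = z₀ + Δx₀, u_k = v_k + Σ_{i=0}^{k} K^{k,i}(x_{k−i} − z_{k−i}), x_{k+1} = A x_k + B u_k + B_w w_k satisfies ⟨A_{x,j}, x_k⟩ ≤ b_{x,j} and ⟨A_{u,j}, u_k⟩ ≤ b_{u,j} for all k = 0,…,N−1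 and all j, then Φ_x and Φ_u satisfy (I − Z𝒜)Φ_x − ZℬΦ_u = ℰ and the tightened constraints hold: ⟨A_{x,j}, z_k⟩ + ‖(Φ_{x,0}^k P_init)ᵀ A_{x,j}‖₁ + ‖(Φ_{x,w}^k)ᵀ A_{x,j}‖₁ ≤ b_{x,j} and ⟨A_{u,j}, v_k⟩ + ‖(Φ_{u,0}^k P_init)ᵀ A_{u,j}‖₁ + ‖(Φ_{u,w}^k)ᵀ A_{u,j}‖₁ ≤ b_{u,j} for all k = 0,…,N−1 and all j. -/
open Matrix Finset Pointwise

noncomputable section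

/-! ### Auxiliary lemmas -/

section Aux

lemma det_one_sub_strictBlockLT {N p : ℕ}
    {M : Matrix (Fin (N+1) × Fin p) (Fin (N+1) × Fin p) ℝ} (hM : StrictBlockLT M) :
    (1 - M).det = 1 := by
  have hbt : (1 - M).BlockTriangular (fun q : Fin (N+1) × Fin p => (-(q.1 : ℤ))) := by
    rintro ⟨i, a⟩ ⟨j, b⟩ hij
    simp only at hij
    have h1 : (i : ℕ) < (j : ℕ) := by
      have := neg_lt_neg_iff.mp hij
      exact_mod_cast this
    have hne : (i, a) ≠ (j, b) := by
      intro h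
      rw [Prod.mk.injEq] at h
      rw [h.1] at h1
      exact lt_irrefl _ h1
    rw [Matrix.sub_apply, Matrix.one_apply_ne hne,
      hM i j a b (Fin.lt_iff_val_lt_val.mpr h1).le, sub_zero]
  rw [hbt.det]
  apply Finset.prod_eq_one
  intro c _
  have hblk : (1 - M).toSquareBlock (fun q : Fin (N+1) × Fin p => (-(q.1 : ℤ))) c = 1 := by
    ext ⟨⟨i, a⟩, hi⟩ ⟨⟨j, b⟩, hj⟩
    simp only at hi hj
    have hij : i = j := by
      have : (-(i : ℤ)) = -(j : ℤ) := by rw [hi, hj]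
      have : (i : ℤ) = (j : ℤ) := by linarith
      exact Fin.ext (by exact_mod_cast this)
    subst hij
    show (1 - M) (i, a) (i, b) = _
    rw [Matrix.sub_apply, hM i i a b le_rfl, sub_zero]
    by_cases hab : a = b
    · subst hab; rw [Matrix.one_apply_eq, Matrix.one_apply_eq]
    · rw [Matrix.one_apply_ne (by simp [Prod.ext_iff, hab]),
        Matrix.one_apply_ne (by simp [Subtype.ext_iff, Prod.ext_iff, hab])]
  rw [hblk, Matrix.det_one]

lemma blockLT_diagA {n N : ℕ} (A : Matrix (Fin n) (Fin n) ℝ) : BlockLT (blkDiagA N A) := by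
  intro i j a b hij
  exact if_neg (fun h => absurd h.1 (ne_of_lt hij))

lemma blockLT_mul_diagB {n m N : ℕ} (B : Matrix (Fin n) (Fin m) ℝ)
    (K : Matrix (Fin (N+1) × Fin m) (Fin (N+1) × Fin n) ℝ) (hK : BlockLT K) :
    BlockLT (blkDiagB N B * K) := by
  intro i j a b hij
  show ∑ qc : Fin (N+1) × Fin m, blkDiagB N B (i, a) qc * K qc (j, b) = 0
  apply Finset.sum_eq_zero
  rintro ⟨q, c⟩ _
  by_cases h : i = q
  · subst h; rw [hK i j c b hij, mul_zero]
  · rw [show blkDiagB N B (i, a) (q, c) = 0 from if_neg (fun hh => h hh.1), zero_mul]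

lemma blockLT_add_s10 {p q N : ℕ} {M₁ M₂ : Matrix (Fin (N+1) × Fin p) (Fin (N+1) × Fin q) ℝ}
    (h1 : BlockLT M₁) (h2 : BlockLT M₂) : BlockLT (M₁ + M₂) := by
  intro i j a b hij
  show M₁ (i,a) (j,b) + M₂ (i,a) (j,b) = 0
  rw [h1 i j a b hij, h2 i j a b hij, add_zero]

lemma strictBlockLT_downshift_mul {n p N : ℕ}
    (C : Matrix (Fin (N+1) × Fin n) (Fin (N+1) × Fin p) ℝ) (hC : BlockLT C) :
    StrictBlockLT (downshift N n * C) := by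
  intro i j a b hij
  show ∑ qc : Fin (N+1) × Fin n, downshift N n (i, a) qc * C qc (j, b) = 0
  apply Finset.sum_eq_zero
  rintro ⟨q, c⟩ -
  by_cases h : (i : ℕ) = (q : ℕ) + 1 ∧ a = c
  · have hqj : q < j := by
      rw [Fin.lt_iff_val_lt_val]
      have := Fin.le_iff_val_le_val.mp hij
      omega
    rw [hC q j c b hqj, mul_zero]
  · rw [show downshift N n (i, a) (q, c) = 0 from if_neg h, zero_mul]

lemma downshift_mulVec_zero {n N : ℕ} (v : Fin (N+1) × Fin n → ℝ) (a : Fin n) :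
    (downshift N n *ᵥ v) (0, a) = 0 := by
  show ∑ qc : Fin (N+1) × Fin n, downshift N n (0, a) qc * v qc = 0
  apply Finset.sum_eq_zero
  rintro ⟨q, c⟩ -
  rw [show downshift N n (0, a) (q, c) = 0 from if_neg (fun h => by
    have := h.1; simp at this), zero_mul]

lemma downshift_mulVec_succ {n N : ℕ} (v : Fin (N+1) × Fin n → ℝ) (k : Fin N) (a : Fin n) :
    (downshift N n *ᵥ v) (k.succ, a) = v (k.castSucc, a) := by
  show ∑ qc : Fin (N+1) × Fin n, downshift N n (k.succ, a) qc * v qc = _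
  rw [Finset.sum_eq_single ((k.castSucc, a) : Fin (N+1) × Fin n)]
  · rw [show downshift N n (k.succ, a) (k.castSucc, a) = 1 from if_pos (by simp), one_mul]
  · rintro ⟨q, c⟩ - hne
    rw [show downshift N n (k.succ, a) (q, c) = 0 from if_neg (fun h => hne (by
      obtain ⟨h1, h2⟩ := h
      have h1' : ((k.succ : Fin (N+1)) : ℕ) = (q : ℕ) + 1 := h1
      have h2' : a = c := h2
      subst h2'
      have hs : ((k.succ : Fin (N+1)) : ℕ) = (k : ℕ) + 1 := Fin.val_succ k
      have hq : (q : ℕ) = ((k.castSucc : Fin (N+1)) : ℕ) := by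
        rw [Fin.coe_castSucc]; omega
      rw [Fin.ext hq])), zero_mul]
  · intro h; exact absurd (Finset.mem_univ _) h

lemma blkDiagA_mulVec {n N : ℕ} (A : Matrix (Fin n) (Fin n) ℝ) (v : Fin (N+1) × Fin n → ℝ)
    (k : Fin (N+1)) (hk : (k : ℕ) < N) (a : Fin n) :
    (blkDiagA N A *ᵥ v) (k, a) = (A *ᵥ fun b => v (k, b)) a := by
  show ∑ qc : Fin (N+1) × Fin n, blkDiagA N A (k, a) qc * v qc = _
  rw [Fintype.sum_prod_type, Finset.sum_eq_single k]
  · apply Finset.sum_congr rfl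
    intro c _
    rw [show blkDiagA N A (k, a) (k, c) = A a c from if_pos ⟨rfl, hk⟩]
  · intro q _ hq
    apply Finset.sum_eq_zero
    intro c _
    rw [show blkDiagA N A (k, a) (q, c) = 0 from if_neg (fun h => hq h.1.symm), zero_mul]
  · intro h; exact absurd (Finset.mem_univ _) h

lemma blkDiagB_mulVec {n m N : ℕ} (B : Matrix (Fin n) (Fin m) ℝ) (v : Fin (N+1) × Fin m → ℝ)
    (k : Fin (N+1)) (hk : (k : ℕ) < N) (a : Fin n) :
    (blkDiagB N B *ᵥ v) (k, a) = (B *ᵥ fun b => v (k, b)) a := by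
  show ∑ qc : Fin (N+1) × Fin m, blkDiagB N B (k, a) qc * v qc = _
  rw [Fintype.sum_prod_type, Finset.sum_eq_single k]
  · apply Finset.sum_congr rfl
    intro c _
    rw [show blkDiagB N B (k, a) (k, c) = B a c from if_pos ⟨rfl, hk⟩]
  · intro q _ hq
    apply Finset.sum_eq_zero
    intro c _
    rw [show blkDiagB N B (k, a) (q, c) = 0 from if_neg (fun h => hq h.1.symm), zero_mul]
  · intro h; exact absurd (Finset.mem_univ _) h

lemma blkDiagE_mulVec_zero {n N : ℕ} (Bw : Matrix (Fin n) (Fin n) ℝ)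
    (v : Fin (N+1) × Fin n → ℝ) (a : Fin n) :
    (blkDiagE N Bw *ᵥ v) (0, a) = v (0, a) := by
  show ∑ qc : Fin (N+1) × Fin n, blkDiagE N Bw (0, a) qc * v qc = _
  rw [Finset.sum_eq_single ((0, a) : Fin (N+1) × Fin n)]
  · rw [show blkDiagE N Bw (0, a) (0, a) = 1 by simp [blkDiagE], one_mul]
  · rintro ⟨q, c⟩ - hne
    rw [show blkDiagE N Bw (0, a) (q, c) = 0 by
      by_cases h0 : (0 : Fin (N+1)) = q
      · subst h0
        have hac : a ≠ c := fun h => hne (by rw [h])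
        simp [blkDiagE, hac]
      · simp [blkDiagE, h0], zero_mul]
  · intro h; exact absurd (Finset.mem_univ _) h

lemma blkDiagE_mulVec_succ {n N : ℕ} (Bw : Matrix (Fin n) (Fin n) ℝ)
    (v : Fin (N+1) × Fin n → ℝ) (k : Fin N) (a : Fin n) :
    (blkDiagE N Bw *ᵥ v) (k.succ, a) = (Bw *ᵥ fun b => v (k.succ, b)) a := by
  show ∑ qc : Fin (N+1) × Fin n, blkDiagE N Bw (k.succ, a) qc * v qc = _
  rw [Fintype.sum_prod_type, Finset.sum_eq_single k.succ]
  · apply Finset.sum_congr rfl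
    intro c _
    rw [show blkDiagE N Bw (k.succ, a) (k.succ, c) = Bw a c by
      have : ((k.succ : Fin (N+1)) : ℕ) ≠ 0 := by simp [Fin.val_succ]
      simp [blkDiagE, this]]
  · intro q _ hq
    apply Finset.sum_eq_zero
    intro c _
    rw [show blkDiagE N Bw (k.succ, a) (q, c) = 0 by simp [blkDiagE, Ne.symm hq],
      zero_mul]
  · intro h; exact absurd (Finset.mem_univ _) h

/-- sign of a real number (as `±1`) -/
def sgn (r : ℝ) : ℝ := if 0 ≤ r then 1 else -1

lemma abs_sgn_le (r : ℝ) : |sgn r| ≤ 1 := by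
  unfold sgn; split <;> simp

lemma mul_sgn (r : ℝ) : r * sgn r = |r| := by
  unfold sgn
  split
  · rw [mul_one, abs_of_nonneg ‹_›]
  · rw [mul_neg_one, abs_of_neg (lt_of_not_ge ‹_›)]

/-- stack initial deviation and disturbances into one long vector -/
def mkEta {n N : ℕ} (d : Fin n → ℝ) (w : Fin N → Fin n → ℝ) : Fin (N+1) × Fin n → ℝ :=
  fun qb => Fin.cases (d qb.2) (fun q => w q qb.2) qb.1

lemma mkEta_zero {n N : ℕ} (d : Fin n → ℝ) (w : Fin N → Fin n → ℝ) (b : Fin n) :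
    mkEta d w (0, b) = d b := rfl

lemma mkEta_succ {n N : ℕ} (d : Fin n → ℝ) (w : Fin N → Fin n → ℝ) (q : Fin N) (b : Fin n) :
    mkEta d w (q.succ, b) = w q b := by
  unfold mkEta
  exact Fin.cases_succ _

/-- the master dot-product splitting -/
lemma dot_row {n N p : ℕ} (Pinit : Matrix (Fin n) (Fin n) ℝ)
    (Φ : Matrix (Fin (N+1) × Fin p) (Fin (N+1) × Fin n) ℝ)
    (a : Fin p → ℝ) (kc : Fin (N+1)) (s : Fin n → ℝ) (w : Fin N → Fin n → ℝ) :
    a ⬝ᵥ (fun i => (Φ *ᵥ mkEta (Pinit *ᵥ s) w) (kc, i)) =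
      (((blk Φ kc 0 * Pinit)ᵀ *ᵥ a) ⬝ᵥ s)
        + ∑ qb : Fin N × Fin n, ((blkRowW Φ kc)ᵀ *ᵥ a) qb * w qb.1 qb.2 := by
  have lhs_eq : a ⬝ᵥ (fun i => (Φ *ᵥ mkEta (Pinit *ᵥ s) w) (kc, i))
      = ∑ qb : Fin (N+1) × Fin n, (∑ i, a i * Φ (kc, i) qb) * mkEta (Pinit *ᵥ s) w qb := by
    unfold dotProduct Matrix.mulVec
    simp only [dotProduct, Finset.mul_sum]
    rw [Finset.sum_comm]
    apply Finset.sum_congr rfl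
    intro qb _
    rw [Finset.sum_mul]
    apply Finset.sum_congr rfl
    intro i _
    ring
  rw [lhs_eq, Fintype.sum_prod_type, Fin.sum_univ_succ]
  congr 1
  · -- initial-state part
    simp only [mkEta_zero]
    have h1 : ∀ b : Fin n, (∑ i, a i * Φ (kc, i) ((0 : Fin (N+1)), b))
        = ((blk Φ kc 0)ᵀ *ᵥ a) b := by
      intro b
      simp [Matrix.mulVec, dotProduct, blk, Matrix.transpose_apply, mul_comm]
    calc (∑ b, (∑ i, a i * Φ (kc, i) ((0 : Fin (N+1)), b)) * (Pinit *ᵥ s) b)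
        = ((blk Φ kc 0)ᵀ *ᵥ a) ⬝ᵥ (Pinit *ᵥ s) := by
          exact Finset.sum_congr rfl (fun b _ => by rw [h1 b])
      _ = (((blk Φ kc 0)ᵀ *ᵥ a) ᵥ* Pinit) ⬝ᵥ s := Matrix.dotProduct_mulVec _ _ _
      _ = ((blk Φ kc 0 * Pinit)ᵀ *ᵥ a) ⬝ᵥ s := by
          rw [Matrix.transpose_mul, ← Matrix.mulVec_mulVec, Matrix.mulVec_transpose,
            Matrix.mulVec_transpose]
  · -- disturbance part
    rw [Fintype.sum_prod_type]
    apply Finset.sum_congr rfl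
    intro q _
    apply Finset.sum_congr rfl
    intro b _
    rw [mkEta_succ]
    congr 1
    simp [Matrix.mulVec, dotProduct, Matrix.transpose_apply, blkRowW, mul_comm]

end Aux

/-- Proposition 2, necessity direction. -/
theorem stmt10 (n m N nx nu : ℕ) (hN : 1 ≤ N)
    (A : Matrix (Fin n) (Fin n) ℝ) (B : Matrix (Fin n) (Fin m) ℝ)
    (Bw : Matrix (Fin n) (Fin n) ℝ) (Pinit : Matrix (Fin n) (Fin n) ℝ)
    (Ax : Fin nx → Fin n → ℝ) (bx : Fin nx → ℝ)
    (Au : Fin nu → Fin m → ℝ) (bu : Fin nu → ℝ)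
    (K : Matrix (Fin (N+1) × Fin m) (Fin (N+1) × Fin n) ℝ) (hK : BlockLT K)
    (z : Fin (N+1) → Fin n → ℝ) (v : Fin N → Fin m → ℝ)
    (hz : ∀ k : Fin N, z k.succ = A *ᵥ z k.castSucc + B *ᵥ v k)
    (Φx : Matrix (Fin (N+1) × Fin n) (Fin (N+1) × Fin n) ℝ)
    (Φu : Matrix (Fin (N+1) × Fin m) (Fin (N+1) × Fin n) ℝ)
    (hΦxdef : Φx = (1 - downshift N n * (blkDiagA N A + blkDiagB N B * K))⁻¹ * blkDiagE N Bw)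
    (hΦudef : Φu = K * Φx)
    (hsafe : ∀ (Δx₀ : Fin n → ℝ), Δx₀ ∈ Matrix.mulVec Pinit '' Binf (Fin n) →
      ∀ (w : Fin N → Fin n → ℝ), (∀ k, w k ∈ Binf (Fin n)) →
      ∀ (x : Fin (N+1) → Fin n → ℝ) (u : Fin N → Fin m → ℝ),
        x 0 = z 0 + Δx₀ →
        (∀ k : Fin N, u k = v k + ∑ j : Fin (N+1),
            if (j : ℕ) ≤ (k : ℕ) then (blk K k.castSucc j) *ᵥ (x j - z j) else 0) →
        (∀ k : Fin N, x k.succ = A *ᵥ x k.castSucc + B *ᵥ u k + Bw *ᵥ w k) →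
        ∀ k : Fin N, (∀ j, Ax j ⬝ᵥ x k.castSucc ≤ bx j) ∧ (∀ j, Au j ⬝ᵥ u k ≤ bu j)) :
    ((1 - downshift N n * blkDiagA N A) * Φx - downshift N n * blkDiagB N B * Φu
      = blkDiagE N Bw) ∧
    (∀ (k : Fin N) (j : Fin nx),
      Ax j ⬝ᵥ z k.castSucc + (∑ i, |((blk Φx k.castSucc 0 * Pinit)ᵀ *ᵥ Ax j) i|)
        + (∑ q, |((blkRowW Φx k.castSucc)ᵀ *ᵥ Ax j) q|) ≤ bx j) ∧
    (∀ (k : Fin N) (j : Fin nu),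
      Au j ⬝ᵥ v k + (∑ i, |((blk Φu k.castSucc 0 * Pinit)ᵀ *ᵥ Au j) i|)
        + (∑ q, |((blkRowW Φu k.castSucc)ᵀ *ᵥ Au j) q|) ≤ bu j) := by
  classical
  set Z := downshift N n with hZ
  set 𝒜 := blkDiagA N A with h𝒜
  set ℬ := blkDiagB N B with hℬ
  set E := blkDiagE N Bw with hEdef
  set M := Z * (𝒜 + ℬ * K) with hMdef
  have hMstrict : StrictBlockLT M :=
    strictBlockLT_downshift_mul _ (blockLT_add_s10 (blockLT_diagA A) (blockLT_mul_diagB B K hK))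
  have hdet : IsUnit (1 - M).det := by
    rw [det_one_sub_strictBlockLT hMstrict]; exact isUnit_one
  have hE : (1 - M) * Φx = E := by
    rw [hΦxdef, ← Matrix.mul_assoc, Matrix.mul_nonsing_inv _ hdet, Matrix.one_mul]
  have part1 : (1 - Z * 𝒜) * Φx - Z * ℬ * Φu = E := by
    rw [hΦudef, ← hE, hMdef, ← Matrix.mul_assoc]
    noncomm_ring
    simp only [Matrix.mul_assoc]
  have hfix : Φx = E + M * Φx := by
    have h := hE
    rw [Matrix.sub_mul, Matrix.one_mul] at h
    rw [← h]; abel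
  -- the master safety estimate
  have master : ∀ s : Fin n → ℝ, s ∈ Binf (Fin n) → ∀ w : Fin N → Fin n → ℝ,
      (∀ k, w k ∈ Binf (Fin n)) → ∀ k : Fin N,
      (∀ j, Ax j ⬝ᵥ z k.castSucc
          + (Ax j ⬝ᵥ fun i => (Φx *ᵥ mkEta (Pinit *ᵥ s) w) (k.castSucc, i)) ≤ bx j) ∧
      (∀ j, Au j ⬝ᵥ v k
          + (Au j ⬝ᵥ fun i => (Φu *ᵥ mkEta (Pinit *ᵥ s) w) (k.castSucc, i)) ≤ bu j) := by
    intro s hs w hw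
    set η := mkEta (Pinit *ᵥ s) w with hη
    set Δ : Fin (N+1) × Fin n → ℝ := Φx *ᵥ η with hΔdef
    have hΔ : Δ = E *ᵥ η + M *ᵥ Δ := by
      rw [hΔdef]
      conv_lhs => rw [hfix]
      rw [Matrix.add_mulVec, ← Matrix.mulVec_mulVec]
    have hΔ0 : ∀ a, Δ (0, a) = (Pinit *ᵥ s) a := by
      intro a
      have h := congrFun hΔ ((0 : Fin (N+1)), a)
      rw [Pi.add_apply, blkDiagE_mulVec_zero, hMdef, ← Matrix.mulVec_mulVec,
        downshift_mulVec_zero, add_zero] at h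
      rw [h, hη, mkEta_zero]
    have hΔsucc : ∀ (k : Fin N) (a : Fin n), Δ (k.succ, a) =
        (Bw *ᵥ w k) a + ((A *ᵥ fun b => Δ (k.castSucc, b)) a
          + (B *ᵥ fun b => (K *ᵥ Δ) (k.castSucc, b)) a) := by
      intro k a
      have hk : ((k.castSucc : Fin (N+1)) : ℕ) < N := by
        rw [Fin.coe_castSucc]; exact k.isLt
      have h := congrFun hΔ (k.succ, a)
      rw [Pi.add_apply, blkDiagE_mulVec_succ, hMdef, ← Matrix.mulVec_mulVec,
        downshift_mulVec_succ, Matrix.add_mulVec, Pi.add_apply,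
        blkDiagA_mulVec A _ _ hk a, ← Matrix.mulVec_mulVec,
        blkDiagB_mulVec B _ _ hk a] at h
      have hwk : (fun b => η (k.succ, b)) = w k := by
        funext b; exact mkEta_succ _ _ _ _
      rw [h, hwk]
    have hKrow : ∀ (k : Fin N) (a : Fin m), (K *ᵥ Δ) (k.castSucc, a)
        = (∑ j : Fin (N+1), if (j : ℕ) ≤ (k : ℕ)
            then (blk K k.castSucc j) *ᵥ (fun b => Δ (j, b)) else 0) a := by
      intro k a
      rw [Finset.sum_apply]
      show ∑ qb : Fin (N+1) × Fin n, K (k.castSucc, a) qb * Δ qb = _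
      rw [Fintype.sum_prod_type]
      apply Finset.sum_congr rfl
      intro j _
      rw [apply_ite (fun f : Fin m → ℝ => f a)]
      by_cases hjk : (j : ℕ) ≤ (k : ℕ)
      · rw [if_pos hjk]
        rfl
      · rw [if_neg hjk, Pi.zero_apply]
        apply Finset.sum_eq_zero
        intro b _
        rw [hK k.castSucc j a b (by
          rw [Fin.lt_iff_val_lt_val, Fin.coe_castSucc]; omega), zero_mul]
    intro k
    obtain ⟨h1, h2⟩ := hsafe (Pinit *ᵥ s) ⟨s, hs, rfl⟩ w hw
      (fun k => z k + fun a => Δ (k, a))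
      (fun k => v k + fun a => (K *ᵥ Δ) (k.castSucc, a))
      (by
        funext a
        show z 0 a + Δ (0, a) = z 0 a + (Pinit *ᵥ s) a
        rw [hΔ0])
      (by
        intro k
        funext a
        show v k a + (K *ᵥ Δ) (k.castSucc, a) = v k a + _
        rw [hKrow k a]
        have hxz : ∀ jj : Fin (N+1),
            ((fun k => z k + fun a => Δ (k, a)) jj - z jj) = fun b => Δ (jj, b) := by
          intro jj
          funext b
          show z jj b + Δ (jj, b) - z jj b = Δ (jj, b)
          ring
        simp only [hxz])
      (by
        intro k
        funext a
        show z k.succ a + Δ (k.succ, a) = _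
        rw [hz k, hΔsucc k a]
        show _ = (A *ᵥ (z k.castSucc + fun b => Δ (k.castSucc, b))) a
          + (B *ᵥ (v k + fun b => (K *ᵥ Δ) (k.castSucc, b))) a + (Bw *ᵥ w k) a
        rw [Matrix.mulVec_add, Matrix.mulVec_add, Pi.add_apply, Pi.add_apply,
          Pi.add_apply]
        ring)
      k
    constructor
    · intro j
      have := h1 j
      rw [dotProduct_add] at this
      exact this
    · intro j
      have := h2 j
      rw [dotProduct_add] at this
      have heq : (fun a => (K *ᵥ Δ) (k.castSucc, a))
          = fun i => (Φu *ᵥ η) (k.castSucc, i) := by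
        funext a
        rw [hΦudef, ← Matrix.mulVec_mulVec, ← hΔdef]
      rw [heq] at this
      exact this
  refine ⟨part1, ?_, ?_⟩
  · intro k j
    set C := (blk Φx k.castSucc 0 * Pinit)ᵀ *ᵥ Ax j with hC
    set D := (blkRowW Φx k.castSucc)ᵀ *ᵥ Ax j with hD
    have h := (master (fun i => sgn (C i)) (fun i => abs_sgn_le _)
      (fun q b => sgn (D (q, b))) (fun q b => abs_sgn_le _) k).1 j
    rw [dot_row] at h
    have e1 : C ⬝ᵥ (fun i => sgn (C i)) = ∑ i, |C i| :=
      Finset.sum_congr rfl (fun i _ => mul_sgn _)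
    have e2 : (∑ qb : Fin N × Fin n, D qb * sgn (D (qb.1, qb.2))) = ∑ qb, |D qb| := by
      apply Finset.sum_congr rfl
      intro qb _
      rw [show (qb.1, qb.2) = qb from rfl, mul_sgn]
    rw [e1, e2, ← add_assoc] at h
    exact h
  · intro k j
    set C := (blk Φu k.castSucc 0 * Pinit)ᵀ *ᵥ Au j with hC
    set D := (blkRowW Φu k.castSucc)ᵀ *ᵥ Au j with hD
    have h := (master (fun i => sgn (C i)) (fun i => abs_sgn_le _)
      (fun q b => sgn (D (q, b))) (fun q b => abs_sgn_le _) k).2 j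
    rw [dot_row] at h
    have e1 : C ⬝ᵥ (fun i => sgn (C i)) = ∑ i, |C i| :=
      Finset.sum_congr rfl (fun i _ => mul_sgn _)
    have e2 : (∑ qb : Fin N × Fin n, D qb * sgn (D (qb.1, qb.2))) = ∑ qb, |D qb| := by
      apply Finset.sum_congr rfl
      intro qb _
      rw [show (qb.1, qb.2) = qb from rfl, mul_sgn]
    rw [e1, e2, ← add_assoc] at h
    exact h
end
end
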